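/- Let A be an invertible GFDM matrix with characteristic matrix G having no zero entries, D = KM. Then every row of A^{-1} has squared L2-norm equal to ξ_H = (1/D)·Σ_{k,l} 1/|G_{k,l}|², which is independent of the row index. -/

import Mathlib

open Complex Matrix BigOperators Kronecker

noncomputable section

namespace GFDM

/-- Normalized p-point DFT matrix. -/
def W (p : ℕ) : Matrix (Fin p) (Fin p) ℂ := fun m n =>
  Complex.exp (-2 * Real.pi * Complex.I * (m.val : ℂ) * (n.val : ℂ) / (p : ℂ)) / (Real.sqrt p : ℂ)

/-- Reshape a vector of length K*M into a K×M matrix, (k,m)-entry = g (k + m*K). -/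
def reshape (K M : ℕ) (g : Fin (K * M) → ℂ) : Matrix (Fin K) (Fin M) ℂ := fun k m =>
  g ⟨k.val + m.val * K, by
    have hm := m.isLt
    calc k.val + m.val * K < K + m.val * K := by omega
      _ = (m.val + 1) * K := by ring
      _ ≤ M * K := Nat.mul_le_mul_right K hm
      _ = K * M := Nat.mul_comm M K⟩

/-- Column-wise vectorization of a K×M matrix: (vec G) (k + m*K) = G k m. -/
def vec (K M : ℕ) (G : Matrix (Fin K) (Fin M) ℂ) : Fin (K * M) → ℂ := fun i =>
  G ⟨i.val % K, by
      have h := i.isLt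
      rcases Nat.eq_zero_or_pos K with h0 | h0
      · subst h0; simp at h
      · exact Nat.mod_lt _ h0⟩
    ⟨i.val / K, Nat.div_lt_of_lt_mul i.isLt⟩

/-- The characteristic matrix G = √D · reshape(g,K,M) · W_M. -/
def charMatrix (K M : ℕ) (g : Fin (K * M) → ℂ) : Matrix (Fin K) (Fin M) ℂ :=
  (Real.sqrt (K * M) : ℂ) • (reshape K M g * W M)

/-- Phase-shifted characteristic matrix: Ḡ_{k,m} = G_{k,m} e^{-2πi km/D}. -/
def phaseShift (K M : ℕ) (G : Matrix (Fin K) (Fin M) ℂ) : Matrix (Fin K) (Fin M) ℂ := fun k m =>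
  G k m * Complex.exp (-2 * Real.pi * Complex.I * (k.val : ℂ) * (m.val : ℂ) / ((K * M : ℕ) : ℂ))

/-- Index identification (m,k) ↦ k + K·m between Fin M × Fin K and Fin (K*M). -/
def idx (K M : ℕ) : Fin M × Fin K ≃ Fin (K * M) :=
  finProdFinEquiv.trans (finCongr (Nat.mul_comm M K))

/-- The GFDM matrix (W_M^H ⊗ I_K)·diag(vec G)·(W_M ⊗ W_K^H) built from a characteristic matrix G. -/
def gfdmOfChar (K M : ℕ) (G : Matrix (Fin K) (Fin M) ℂ) :
    Matrix (Fin (K * M)) (Fin (K * M)) ℂ :=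
  Matrix.reindex (idx K M) (idx K M)
    (((W M)ᴴ ⊗ₖ (1 : Matrix (Fin K) (Fin K) ℂ)) *
      Matrix.diagonal (fun p : Fin M × Fin K => G p.2 p.1) *
      (W M ⊗ₖ (W K)ᴴ))

/-- The GFDM matrix defined directly by its columns: the (k+mK)-th column has n-th entry
    g_{⟨n-mK⟩_D} e^{2πi kn/K}. -/
def gfdmMatrix (K M : ℕ) (g : Fin (K * M) → ℂ) : Matrix (Fin (K * M)) (Fin (K * M)) ℂ :=
  fun n c =>
    g ⟨(n.val + K * M - (c.val / K) * K) % (K * M), by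
        have h := n.isLt
        rcases Nat.eq_zero_or_pos (K * M) with h0 | h0
        · omega
        · exact Nat.mod_lt _ h0⟩ *
      Complex.exp (2 * Real.pi * Complex.I * ((c.val % K : ℕ) : ℂ) * (n.val : ℂ) / (K : ℂ))

/-- The permutation matrix Π with Π_{kM+m, nK+l} = δ_{kl} δ_{mn}. -/
def permPi (K M : ℕ) : Matrix (Fin (K * M)) (Fin (K * M)) ℂ := fun i j =>
  if i.val / M = j.val % K ∧ i.val % M = j.val / K then 1 else 0

/-- The index k + m·K as an element of Fin (K*M). -/
def vecIdx {K M : ℕ} (k : Fin K) (m : Fin M) : Fin (K * M) :=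
  ⟨k.val + m.val * K, by
    have hm := m.isLt
    calc k.val + m.val * K < K + m.val * K := by omega
      _ = (m.val + 1) * K := by ring
      _ ≤ M * K := Nat.mul_le_mul_right K hm
      _ = K * M := Nat.mul_comm M K⟩

/-- The index k·M + m as an element of Fin (K*M). -/
def rowIdx {K M : ℕ} (k : Fin K) (m : Fin M) : Fin (K * M) :=
  ⟨k.val * M + m.val, by
    have hk := k.isLt
    calc k.val * M + m.val < k.val * M + M := by omega
      _ = (k.val + 1) * M := by ring
      _ ≤ K * M := Nat.mul_le_mul_right M hk⟩


/-!
Write `A = U * diagonal (vec G) * V` with `U = W_Mᴴ ⊗ I_K` and `V = W_M ⊗ W_Kᴴ`. Both are unitary,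
since `W_p` is (orthogonality of the `p`-th roots of unity), so `A⁻¹ = Vᴴ * diagonal (vec G)⁻¹ * Uᴴ`.
Right multiplication by the unitary `Uᴴ` does not change row norms, hence the squared norm of the
`n`-th row of `A⁻¹` is `∑ r, |V r n|² / |G r|²`, and every entry of `V` has modulus `1 / √(KM)`.
-/

theorem _root_.IsPrimitiveRoot.geom_sum_zpow_eq_zero {K : Type*} [Field K] {ζ : K} {p : ℕ}
    (hζ : IsPrimitiveRoot ζ p) {l : ℤ} (hl : ¬ (p : ℤ) ∣ l) :
    ∑ j ∈ Finset.range p, (ζ ^ l) ^ j = 0 := by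
  have hne : ζ ^ l ≠ 1 := fun h => hl ((hζ.zpow_eq_one_iff_dvd l).mp h)
  have hpow : (ζ ^ l) ^ p = 1 := by
    rw [← zpow_natCast, ← _root_.zpow_mul, mul_comm, _root_.zpow_mul, zpow_natCast,
      hζ.pow_eq_one, _root_.one_zpow]
  rw [geom_sum_eq hne, hpow, sub_self, zero_div]

lemma star_W_mul_W (p : ℕ) (j a b : Fin p) :
    star (W p j a) * W p j b =
      (Complex.exp (2 * Real.pi * Complex.I / p) ^ ((a : ℤ) - b)) ^ (j : ℕ) / p := by
  have hsqrt : (Real.sqrt p : ℂ) * Real.sqrt p = p := by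
    rw [← Complex.ofReal_mul, Real.mul_self_sqrt (Nat.cast_nonneg p), Complex.ofReal_natCast]
  simp only [W, Complex.star_def, map_div₀, ← Complex.exp_conj, Complex.conj_ofReal]
  rw [div_mul_div_comm, hsqrt, ← Complex.exp_add, ← Complex.exp_int_mul, ← Complex.exp_nat_mul]
  congr 2
  simp only [map_mul, map_neg, Complex.conj_I, Complex.conj_ofReal, Complex.conj_natCast,
    map_ofNat]
  push_cast
  ring

lemma W_conjTranspose_mul_self {p : ℕ} (hp : 0 < p) : (W p)ᴴ * W p = 1 := by
  have hζ := Complex.isPrimitiveRoot_exp p hp.ne'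
  ext a b
  simp only [Matrix.mul_apply, Matrix.conjTranspose_apply, star_W_mul_W, ← Finset.sum_div,
    Matrix.one_apply]
  rw [Fin.sum_univ_eq_sum_range (fun j => (_ : ℂ) ^ j) p]
  split_ifs with hab
  · subst hab
    simp [(Nat.cast_ne_zero.mpr hp.ne' : (p : ℂ) ≠ 0)]
  · rw [hζ.geom_sum_zpow_eq_zero, zero_div]
    intro hdvd
    refine hab (Fin.ext ?_)
    have := Int.eq_zero_of_abs_lt_dvd hdvd (by rw [abs_lt]; omega)
    omega

lemma W_mem_unitaryGroup {p : ℕ} (hp : 0 < p) : W p ∈ unitaryGroup (Fin p) ℂ :=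
  mem_unitaryGroup_iff'.mpr (W_conjTranspose_mul_self hp)

lemma norm_W_apply (p : ℕ) (m n : Fin p) : ‖W p m n‖ = (Real.sqrt p)⁻¹ := by
  have harg : -2 * (Real.pi : ℂ) * Complex.I * (m : ℂ) * (n : ℂ) / (p : ℂ)
      = ((-2 * Real.pi * m * n / p : ℝ) : ℂ) * Complex.I := by
    push_cast; ring
  rw [W, norm_div, harg, Complex.norm_exp_ofReal_mul_I, Complex.norm_real, Real.norm_eq_abs,
    abs_of_nonneg (Real.sqrt_nonneg _), one_div]

lemma norm_sq_W_apply (p : ℕ) (m n : Fin p) : ‖W p m n‖ ^ 2 = (p : ℝ)⁻¹ := by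
  rw [norm_W_apply, inv_pow, Real.sq_sqrt (Nat.cast_nonneg p)]

lemma norm_sq_W_kronecker_conjTranspose_W_apply (K M : ℕ) (r q : Fin M × Fin K) :
    ‖(W M ⊗ₖ (W K)ᴴ) r q‖ ^ 2 = ((K * M : ℕ) : ℝ)⁻¹ := by
  rw [kroneckerMap_apply, conjTranspose_apply, norm_mul, norm_star, mul_pow, norm_sq_W_apply,
    norm_sq_W_apply, Nat.cast_mul, mul_inv, mul_comm]

section Unitary

variable {m n : Type*} [Fintype n]

lemma mul_conjTranspose_self_apply_self {𝕜 : Type*} [RCLike 𝕜] (B : Matrix m n 𝕜) (i : m) :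
    (B * Bᴴ) i i = ((∑ j, ‖B i j‖ ^ 2 : ℝ) : 𝕜) := by
  simp only [mul_apply, conjTranspose_apply, RCLike.star_def, RCLike.mul_conj]
  push_cast
  rfl

variable [DecidableEq n]

lemma inv_mul_diagonal_mul_of_mem_unitaryGroup {α : Type*} [Field α] [StarRing α]
    {U V : Matrix n n α} (hU : U ∈ unitaryGroup n α) (hV : V ∈ unitaryGroup n α)
    {d : n → α} (hd : ∀ i, d i ≠ 0) :
    (U * diagonal d * V)⁻¹ = star V * diagonal d⁻¹ * star U := by
  have hdd : diagonal d * diagonal d⁻¹ = 1 := by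
    rw [diagonal_mul_diagonal, ← diagonal_one]
    exact congrArg diagonal (funext fun i => mul_inv_cancel₀ (hd i))
  apply inv_eq_right_inv
  calc U * diagonal d * V * (star V * diagonal d⁻¹ * star U)
      = U * (diagonal d * (V * star V) * diagonal d⁻¹) * star U := by
        simp only [Matrix.mul_assoc]
    _ = 1 := by
      rw [Unitary.mul_star_self_of_mem hV, Matrix.mul_one, hdd, Matrix.mul_one,
        Unitary.mul_star_self_of_mem hU]

lemma sum_norm_sq_mul_apply_of_mem_unitaryGroup {𝕜 : Type*} [RCLike 𝕜] (B : Matrix m n 𝕜)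
    {U : Matrix n n 𝕜} (hU : U ∈ unitaryGroup n 𝕜) (i : m) :
    ∑ j, ‖(B * U) i j‖ ^ 2 = ∑ j, ‖B i j‖ ^ 2 := by
  have h := mul_conjTranspose_self_apply_self (B * U) i
  rw [conjTranspose_mul, Matrix.mul_assoc, ← Matrix.mul_assoc U, ← star_eq_conjTranspose U,
    Unitary.mul_star_self_of_mem hU, Matrix.one_mul, mul_conjTranspose_self_apply_self] at h
  exact RCLike.ofReal_injective h.symm

end Unitary

theorem stmt7 (K M : ℕ) (hK : 0 < K) (hM : 0 < M) (G : Matrix (Fin K) (Fin M) ℂ)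
    (h0 : ∀ (k : Fin K) (m : Fin M), G k m ≠ 0) :
    ∀ n : Fin (K * M),
      ∑ j : Fin (K * M), ‖(gfdmOfChar K M G)⁻¹ n j‖ ^ 2 =
        (1 / ((K * M : ℕ) : ℝ)) *
          ∑ k : Fin K, ∑ l : Fin M, (‖G k l‖ ^ 2)⁻¹ := by
  intro n
  have hU : (W M)ᴴ ⊗ₖ (1 : Matrix (Fin K) (Fin K) ℂ) ∈ unitaryGroup _ ℂ :=
    kronecker_mem_unitary (Unitary.star_mem (W_mem_unitaryGroup hM)) (one_mem _)
  have hV : W M ⊗ₖ (W K)ᴴ ∈ unitaryGroup _ ℂ :=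
    kronecker_mem_unitary (W_mem_unitaryGroup hM) (Unitary.star_mem (W_mem_unitaryGroup hK))
  rw [gfdmOfChar, inv_reindex,
    inv_mul_diagonal_mul_of_mem_unitaryGroup hU hV fun q => h0 q.2 q.1]
  simp only [reindex_apply, submatrix_apply]
  rw [Equiv.sum_comp (idx K M).symm fun q => ‖_‖ ^ 2,
    sum_norm_sq_mul_apply_of_mem_unitaryGroup _ (Unitary.star_mem hU)]
  simp only [mul_diagonal, star_apply, norm_mul, norm_star, mul_pow,
    norm_sq_W_kronecker_conjTranspose_W_apply]
  rw [← Finset.mul_sum, Fintype.sum_prod_type, Finset.sum_comm]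
  simp only [Pi.inv_apply, norm_inv, inv_pow, one_div]

end GFDM
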